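/- For weight diagrams D_μ, D_λ with the same typical entries and the same number of ∨'s, any two right paths from D_μ to D_λ have lengths congruent modulo 2; i.e., if θ and θ' are right paths from D_μ to D_λ with lengths l(θ) and l(θ'), then l(θ) ≡ l(θ') (mod 2). -/
import Mathlib


/-! ## Weight diagrams, cap diagrams and right paths (Brundan–Stroppel / Brundan),
as used in "A Weyl-type character formula for PDC modules of gl(m|n)". -/

/-- The symbols of a weight diagram: `∨`, `∧`, `×`, `∘`. -/
inductive Tag : Type
  | vee | wedge | ex | circ
  deriving DecidableEq

/-- A weight diagram: a function `ℤ → {∨,∧,×,∘}` with finitely many non-`∧` entries. -/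
structure WDiag : Type where
  D : ℤ → Tag
  finite : {t : ℤ | D t ≠ Tag.wedge}.Finite

namespace WDiag

/-- The (finite) set of positions of `∨`'s. -/
noncomputable def veeFinset (W : WDiag) : Finset ℤ :=
  W.finite.toFinset.filter (fun t => W.D t = Tag.vee)

/-- The position of the `i`-th `∨`, counted from the left starting with `i = 0`
(junk value if `i` is out of range). -/
noncomputable def nthVee (W : WDiag) (i : ℕ) : ℤ :=
  (W.veeFinset.sort (· ≤ ·)).getD i 0

/-- In the open interval `(p,q)` there are as many `∨`'s as `∧`'s. -/
def capBal (W : WDiag) (p q : ℤ) : Prop :=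
  ((Finset.Ioo p q).filter (fun t => W.D t = Tag.vee)).card =
    ((Finset.Ioo p q).filter (fun t => W.D t = Tag.wedge)).card

/-- `(p,q)` is a cap of the cap diagram of `W`: `p` carries `∨`, `q` is the first `∧` to the
right of `p` such that the `∨`'s and `∧`'s strictly between `p` and `q` pair off.  This
balance condition characterizes the matching obtained by processing the `∨`'s right to left,
joining each `∨` to the first unmarked `∧` to its right. -/
def IsCap (W : WDiag) (p q : ℤ) : Prop :=
  W.D p = Tag.vee ∧ W.D q = Tag.wedge ∧ p < q ∧ W.capBal p q ∧
    ∀ q', p < q' → q' < q → W.D q' = Tag.wedge → ¬ W.capBal p q'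

/-- Cap `(p,q)` is nested (strictly) below cap `(p',q')`. -/
def CapBelow (p q p' q' : ℤ) : Prop := p' < p ∧ q < q'

/-- The diagram obtained by exchanging the `∨` at `p` with the `∧` at `q`. -/
noncomputable def moveDiag (W : WDiag) (p q : ℤ) : WDiag where
  D := fun t => if t = p then Tag.wedge else if t = q then Tag.vee else W.D t
  finite := by
    classical
    refine Set.Finite.subset (W.finite.union (Set.toFinite {p, q})) ?_
    intro t ht
    by_cases h1 : t = p
    · exact Or.inr (by simp [h1])
    · by_cases h2 : t = q
      · exact Or.inr (by simp [h2])
      · left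
        simpa [Set.mem_setOf_eq, h1, h2] using ht

/-- The right move `R_i` (as a relation): exchange the `i`-th `∨` (counted from the left,
`0`-based) with the `∧` to which it is joined by a cap. -/
def RMove (i : ℕ) (W W' : WDiag) : Prop :=
  i < W.veeFinset.card ∧ ∃ q, W.IsCap (W.nthVee i) q ∧ W' = W.moveDiag (W.nthVee i) q

/-- `PathRel l W W'`: applying the right moves recorded in `l` (head first) turns `W`
into `W'`. -/
def PathRel : List ℕ → WDiag → WDiag → Prop
  | [], W, W' => W = W'
  | i :: l, W, W' => ∃ E, RMove i W E ∧ PathRel l E W'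

/-- `l` is a right path from `W` to `W'`: a sequence of right moves
`R_{i₁} ∘ ⋯ ∘ R_{i_k}` with `i₁ ≤ … ≤ i_k`.  Since the composition is applied rightmost
factor first, the list of moves in order of application is weakly decreasing. -/
def IsRightPath (W W' : WDiag) (l : List ℕ) : Prop :=
  l.Chain' (fun a b => b ≤ a) ∧ PathRel l W W'

/-- `W` and `W'` have the same typical entries (`×`'s and `∘`'s). -/
def SameTypical (W W' : WDiag) : Prop :=
  ∀ t, (W.D t = Tag.ex ↔ W'.D t = Tag.ex) ∧ (W.D t = Tag.circ ↔ W'.D t = Tag.circ)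

/-- Totally connected: between any two `∨`'s there is no `∧`. -/
def TC (W : WDiag) : Prop :=
  ∀ p q t, W.D p = Tag.vee → W.D q = Tag.vee → p < t → t < q → W.D t ≠ Tag.wedge

/-- Totally disconnected: between any two `∨`'s there is at least one `∧`. -/
def TDC (W : WDiag) : Prop :=
  ∀ p q, W.D p = Tag.vee → W.D q = Tag.vee → p < q → ∃ t, p < t ∧ t < q ∧ W.D t = Tag.wedge

/-- `[a,b]` is an atypical component: a maximal nonempty interval containing a `∨` and
no `∧` (maximality amounts to `∧`'s at the two positions just outside). -/
def IsComp (W : WDiag) (a b : ℤ) : Prop :=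
  a ≤ b ∧ (∀ t ∈ Finset.Icc a b, W.D t ≠ Tag.wedge) ∧ (∃ t ∈ Finset.Icc a b, W.D t = Tag.vee)
    ∧ W.D (a - 1) = Tag.wedge ∧ W.D (b + 1) = Tag.wedge

/-- Piecewise disconnected (PDC): for any two consecutive atypical components `T_i = [a,b]`,
`T_{i+1} = [a',b']` (no atypical component strictly between them), the number `t_i` of `∨`'s
in `T_i` is at most the number `s_i` of `∧`'s strictly between `T_i` and `T_{i+1}`. -/
def PDC (W : WDiag) : Prop :=
  ∀ a b a' b', W.IsComp a b → W.IsComp a' b' → b < a' →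
    (∀ a'' b'', W.IsComp a'' b'' → ¬(b < a'' ∧ b'' < a')) →
    ((Finset.Icc a b).filter (fun t => W.D t = Tag.vee)).card ≤
      ((Finset.Ioo b a').filter (fun t => W.D t = Tag.wedge)).card

/-- Positions `x` and `y` lie in the same atypical component: no `∧` in between
(inclusively). -/
def SameComp (W : WDiag) (x y : ℤ) : Prop :=
  ∀ t ∈ Finset.Icc (min x y) (max x y), W.D t ≠ Tag.wedge

/-- A labeled right move on a diagram with `r` labeled `∨`'s (the function `Fin r → ℤ`
records the current position of each labeled `∨`): the move `R_i` moves the label currently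
occupying the position of the `i`-th `∨`. -/
def LMove (r : ℕ) (i : ℕ) (S S' : WDiag × (Fin r → ℤ)) : Prop :=
  ∃ (k : Fin r) (q : ℤ), S.2 k = S.1.nthVee i ∧ i < S.1.veeFinset.card ∧
    S.1.IsCap (S.2 k) q ∧ S'.1 = S.1.moveDiag (S.2 k) q ∧ S'.2 = Function.update S.2 k q

/-- Labeled version of `PathRel`. -/
def LPathRel (r : ℕ) : List ℕ → WDiag × (Fin r → ℤ) → WDiag × (Fin r → ℤ) → Prop
  | [], S, S' => S = S'
  | i :: l, S, S' => ∃ E, LMove r i S E ∧ LPathRel r l E S'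

/-- The path `l` from `Wmu` to `Wlam` induces the permutation `σ ∈ Tag(r)`: labeling the `∨`'s
of `Wmu` left to right by `0, …, r−1` and following them along the path, the `k`-th `∨` of
`Wmu` ends at the position of the `σ(k)`-th `∨` of `Wlam`. -/
def Induces (r : ℕ) (Wmu Wlam : WDiag) (l : List ℕ) (σ : Equiv.Perm (Fin r)) : Prop :=
  ∃ f : Fin r → ℤ, LPathRel r l (Wmu, fun k => Wmu.nthVee k) (Wlam, f) ∧
    ∀ k : Fin r, f k = Wlam.nthVee (σ k)

end WDiag

/-- The weight diagram of a strictly dominant integral weight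
`λ^ρ = Σ a_i ε_i − Σ b_j δ_j` of `gl(m|n)`:  put `∨` at `t` if `t ∈ {a_i} ∩ {b_j}`,
`×` if `t ∈ {a_i} ∖ {b_j}`, `∘` if `t ∈ {b_j} ∖ {a_i}`, and `∧` otherwise. -/
noncomputable def wdOf {m n : ℕ} (a : Fin m → ℤ) (b : Fin n → ℤ) : WDiag := by
  classical
  refine ⟨fun t => if ∃ i, a i = t then (if ∃ j, b j = t then Tag.vee else Tag.ex)
      else (if ∃ j, b j = t then Tag.circ else Tag.wedge), ?_⟩
  refine Set.Finite.subset ((Set.finite_range a).union (Set.finite_range b)) ?_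
  intro t ht
  by_cases hA : ∃ i, a i = t
  · exact Or.inl (by obtain ⟨i, hi⟩ := hA; exact ⟨i, hi⟩)
  · by_cases hB : ∃ j, b j = t
    · exact Or.inr (by obtain ⟨j, hj⟩ := hB; exact ⟨j, hj⟩)
    · exact absurd (by simp [Set.mem_setOf_eq, hA, hB]) ht

namespace WDiag

lemma mem_veeFinset' {W : WDiag} {t : ℤ} : t ∈ W.veeFinset ↔ W.D t = Tag.vee := by
  unfold veeFinset
  rw [Finset.mem_filter, Set.Finite.mem_toFinset]
  constructor
  · exact fun h => h.2
  · intro h; exact ⟨by simp [Set.mem_setOf_eq, h], h⟩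

lemma mem_nwFinset {W : WDiag} {t : ℤ} : t ∈ W.finite.toFinset ↔ W.D t ≠ Tag.wedge := by
  rw [Set.Finite.mem_toFinset]; rfl

/-- Number of non-`∧` entries strictly to the left of `v`. -/
noncomputable def nwBelow (W : WDiag) (v : ℤ) : ℕ :=
  (W.finite.toFinset.filter (fun t => t < v)).card

/-- The parity invariant: sum over `∨`-positions `v` of `v` plus the number of
non-`∧` entries left of `v`, taken in `ZMod 2`. -/
noncomputable def par (W : WDiag) : ZMod 2 :=
  ∑ v ∈ W.veeFinset, ((v : ZMod 2) + (W.nwBelow v : ZMod 2))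

lemma par_move {W : WDiag} {p q : ℤ} (h : W.IsCap p q) :
    (W.moveDiag p q).par = W.par + 1 := by
  classical
  obtain ⟨hp, hq, hpq, hbal, -⟩ := h
  set W' := W.moveDiag p q with hW'
  have hne : p ≠ q := ne_of_lt hpq
  have hD' : ∀ t, W'.D t = if t = p then Tag.wedge else if t = q then Tag.vee else W.D t :=
    fun t => rfl
  -- vee finset of W'
  have hvee' : W'.veeFinset = insert q (W.veeFinset.erase p) := by
    ext t
    rw [Finset.mem_insert, Finset.mem_erase, mem_veeFinset', mem_veeFinset', hD' t]
    by_cases h1 : t = p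
    · subst h1; simp [hne]
    · by_cases h2 : t = q
      · subst h2; simp [h1, hq, hne.symm]
      · simp [h1, h2]
  -- the nonwedge filter Finsets
  have hF' : ∀ v : ℤ, W'.finite.toFinset.filter (fun t => t < v) =
      if q < v then insert q (((W.finite.toFinset.filter (fun t => t < v))).erase p)
      else ((W.finite.toFinset.filter (fun t => t < v))).erase p := by
    intro v
    split_ifs with hqv
    · ext t
      rw [Finset.mem_insert, Finset.mem_erase, Finset.mem_filter, Finset.mem_filter,
        mem_nwFinset, mem_nwFinset, hD' t]
      by_cases h1 : t = p
      · subst h1; simp [hne, hqv]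
      · by_cases h2 : t = q
        · subst h2; simp [h1, hqv, hq]
        · simp [h1, h2]
    · ext t
      rw [Finset.mem_erase, Finset.mem_filter, Finset.mem_filter,
        mem_nwFinset, mem_nwFinset, hD' t]
      by_cases h1 : t = p
      · subst h1; simp
      · by_cases h2 : t = q
        · subst h2; simp [h1, hq, hqv]
        · simp [h1, h2]
  have hpmem : ∀ v : ℤ, p < v → p ∈ W.finite.toFinset.filter (fun t => t < v) := by
    intro v hv
    rw [Finset.mem_filter, mem_nwFinset]
    exact ⟨by simp [hp], hv⟩
  have hqnot : ∀ v : ℤ, q ∉ W.finite.toFinset.filter (fun t => t < v) := by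
    intro v hmem
    rw [Finset.mem_filter, mem_nwFinset] at hmem
    exact hmem.1 hq
  -- nwBelow relations
  have hnw_gt : ∀ v : ℤ, q < v → W'.nwBelow v = W.nwBelow v := by
    intro v hv
    unfold nwBelow
    rw [hF' v, if_pos hv, Finset.card_insert_of_notMem (fun hm => hqnot v (Finset.mem_of_mem_erase hm)),
      Finset.card_erase_of_mem (hpmem v (lt_trans hpq hv))]
    have : 1 ≤ (W.finite.toFinset.filter (fun t => t < v)).card :=
      Finset.card_pos.mpr ⟨p, hpmem v (lt_trans hpq hv)⟩
    omega
  have hnw_le : ∀ v : ℤ, v ≤ p → W'.nwBelow v = W.nwBelow v := by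
    intro v hv
    unfold nwBelow
    rw [hF' v, if_neg (by omega), Finset.erase_eq_of_notMem]
    intro hm
    rw [Finset.mem_filter] at hm
    omega
  have hnw_mid : ∀ v : ℤ, p < v → v ≤ q → W'.nwBelow v + 1 = W.nwBelow v := by
    intro v h1 h2
    unfold nwBelow
    rw [hF' v, if_neg (by omega), Finset.card_erase_of_mem (hpmem v h1)]
    have : 1 ≤ (W.finite.toFinset.filter (fun t => t < v)).card :=
      Finset.card_pos.mpr ⟨p, hpmem v h1⟩
    omega
  -- counts inside (p,q)
  set K : ℕ := ((Finset.Ioo p q).filter (fun t => W.D t = Tag.vee)).card with hK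
  set N : ℕ := ((Finset.Ioo p q).filter (fun t => W.D t ≠ Tag.wedge)).card with hN
  have hIoo : (Finset.Ioo p q).card = K + N := by
    rw [hK, hbal, hN]
    exact (Finset.card_filter_add_card_filter_not
      (p := fun t => W.D t = Tag.wedge)).symm
  have hcardIoo : ((Finset.Ioo p q).card : ℤ) = q - p - 1 := by
    rw [Int.card_Ioo]; omega
  -- nw q = nw p + 1 + N
  have hnwq : W.nwBelow q = W.nwBelow p + 1 + N := by
    unfold nwBelow
    have hsplit : W.finite.toFinset.filter (fun t => t < q) =
        (W.finite.toFinset.filter (fun t => t < p)) ∪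
          insert p ((Finset.Ioo p q).filter (fun t => W.D t ≠ Tag.wedge)) := by
      ext t
      simp only [Finset.mem_union, Finset.mem_insert, Finset.mem_filter, mem_nwFinset,
        Finset.mem_Ioo]
      constructor
      · rintro ⟨ht, htq⟩
        by_cases h1 : t < p
        · exact Or.inl ⟨ht, h1⟩
        · by_cases h2 : t = p
          · exact Or.inr (Or.inl h2)
          · exact Or.inr (Or.inr ⟨⟨by omega, htq⟩, ht⟩)
      · rintro (⟨ht, h1⟩ | h2 | ⟨⟨h1, h2⟩, ht⟩)
        · exact ⟨ht, by omega⟩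
        · subst h2; exact ⟨by simp [hp], hpq⟩
        · exact ⟨ht, h2⟩
    have hdisj : Disjoint (W.finite.toFinset.filter (fun t => t < p))
        (insert p ((Finset.Ioo p q).filter (fun t => W.D t ≠ Tag.wedge))) := by
      rw [Finset.disjoint_left]
      intro t ht1 ht2
      simp only [Finset.mem_filter] at ht1
      simp only [Finset.mem_insert, Finset.mem_filter, Finset.mem_Ioo] at ht2
      omega
    have hnm : p ∉ (Finset.Ioo p q).filter (fun t => W.D t ≠ Tag.wedge) := by
      simp only [Finset.mem_filter, Finset.mem_Ioo]
      omega
    rw [hsplit, Finset.card_union_of_disjoint hdisj, Finset.card_insert_of_notMem hnm]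
    omega
  -- nw' q
  have hnwq' : (W'.nwBelow q : ZMod 2) = (W.nwBelow p : ZMod 2) + N := by
    have := hnw_mid q hpq le_rfl
    have h2 : W'.nwBelow q + 1 = W.nwBelow p + 1 + N := by omega
    have h3 : ((W'.nwBelow q + 1 : ℕ) : ZMod 2) = ((W.nwBelow p + 1 + N : ℕ) : ZMod 2) := by
      rw [h2]
    push_cast at h3
    linear_combination h3
  -- membership facts for the vee finsets
  have hpA : p ∈ W.veeFinset := mem_veeFinset'.mpr hp
  have hqB : q ∉ W.veeFinset.erase p := by
    intro hm
    exact absurd (mem_veeFinset'.mp (Finset.mem_of_mem_erase hm)) (by simp [hq])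
  -- pointwise comparison on B := erase p (veeFinset W)
  have hpoint : ∀ v ∈ W.veeFinset.erase p,
      ((v : ZMod 2) + (W'.nwBelow v : ZMod 2)) =
        ((v : ZMod 2) + (W.nwBelow v : ZMod 2)) + (if v ∈ Finset.Ioo p q then 1 else 0) := by
    intro v hv
    have hvp : v ≠ p := (Finset.mem_erase.mp hv).1
    have hvq : v ≠ q := by
      intro hvq; subst hvq; exact absurd (mem_veeFinset'.mp (Finset.mem_of_mem_erase hv)) (by simp [hq])
    rcases lt_trichotomy v p with h1 | h1 | h1
    · rw [hnw_le v (le_of_lt h1), if_neg (by rw [Finset.mem_Ioo]; omega)]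
      ring
    · exact absurd h1 hvp
    · rcases lt_trichotomy v q with h2 | h2 | h2
      · rw [if_pos (Finset.mem_Ioo.mpr ⟨h1, h2⟩)]
        have hmid := hnw_mid v h1 (le_of_lt h2)
        have h3 : ((W'.nwBelow v + 1 : ℕ) : ZMod 2) = ((W.nwBelow v : ℕ) : ZMod 2) := by
          rw [hmid]
        push_cast at h3
        have hone : (1 : ZMod 2) + 1 = 0 := by decide
        linear_combination h3 - hone
      · exact absurd h2 hvq
      · rw [hnw_gt v h2, if_neg (by rw [Finset.mem_Ioo]; omega)]
        ring
  -- the indicator sum over B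
  have hind : (∑ v ∈ W.veeFinset.erase p, (if v ∈ Finset.Ioo p q then (1 : ZMod 2) else 0))
      = (K : ZMod 2) := by
    rw [Finset.sum_ite_mem]
    have hinter : (W.veeFinset.erase p) ∩ Finset.Ioo p q =
        (Finset.Ioo p q).filter (fun t => W.D t = Tag.vee) := by
      ext t
      simp only [Finset.mem_inter, Finset.mem_erase, Finset.mem_filter, mem_veeFinset',
        Finset.mem_Ioo]
      constructor
      · rintro ⟨⟨-, ht⟩, h2⟩; exact ⟨h2, ht⟩
      · rintro ⟨h2, ht⟩; exact ⟨⟨by omega, ht⟩, h2⟩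
    rw [hinter, Finset.sum_const, hK]
    simp
  -- assemble
  have hsum' : W'.par = ((q : ZMod 2) + (W'.nwBelow q : ZMod 2)) +
      ∑ v ∈ W.veeFinset.erase p, ((v : ZMod 2) + (W'.nwBelow v : ZMod 2)) := by
    rw [par, hvee', Finset.sum_insert hqB]
  have hsum : W.par = ((p : ZMod 2) + (W.nwBelow p : ZMod 2)) +
      ∑ v ∈ W.veeFinset.erase p, ((v : ZMod 2) + (W.nwBelow v : ZMod 2)) := by
    rw [par, ← Finset.add_sum_erase _ _ hpA]
  have hBsum : ∑ v ∈ W.veeFinset.erase p, ((v : ZMod 2) + (W'.nwBelow v : ZMod 2)) =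
      (∑ v ∈ W.veeFinset.erase p, ((v : ZMod 2) + (W.nwBelow v : ZMod 2))) + (K : ZMod 2) := by
    rw [Finset.sum_congr rfl hpoint, Finset.sum_add_distrib, hind]
  -- the position difference
  have hqp : (q : ZMod 2) = (p : ZMod 2) + (K : ZMod 2) + (N : ZMod 2) + 1 := by
    have h1 : ((Finset.Ioo p q).card : ℤ) = q - p - 1 := hcardIoo
    rw [hIoo] at h1
    have h2 : (q : ℤ) = p + K + N + 1 := by push_cast at h1 ⊢; omega
    have h3 : ((q : ℤ) : ZMod 2) = (((p : ℤ) + K + N + 1 : ℤ) : ZMod 2) := by rw [h2]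
    push_cast at h3
    exact h3
  rw [hsum', hBsum, hnwq', hqp, hsum]
  have hone : (1 : ZMod 2) + 1 = 0 := by decide
  linear_combination (K : ZMod 2) * hone + (N : ZMod 2) * hone

lemma par_path : ∀ (l : List ℕ) {W W' : WDiag}, PathRel l W W' →
    W'.par = W.par + (l.length : ZMod 2) := by
  intro l
  induction l with
  | nil =>
    intro W W' h
    cases h
    simp
  | cons i l ih =>
    rintro W W' ⟨E, ⟨-, q, hc, hE⟩, hrest⟩
    have h1 := ih hrest
    have h2 : E.par = W.par + 1 := by rw [hE]; exact par_move hc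
    rw [h1, h2, List.length_cons]
    push_cast
    ring

end WDiag

open WDiag in
/-!
STATEMENT 7: Any two right paths between the same pair of weight diagrams have lengths
congruent modulo 2.
-/
theorem stmt7 (Wmu Wlam : WDiag) (l l' : List ℕ)
    (h : WDiag.IsRightPath Wmu Wlam l) (h' : WDiag.IsRightPath Wmu Wlam l') :
    l.length % 2 = l'.length % 2 := by
  have h1 := WDiag.par_path l h.2
  have h2 := WDiag.par_path l' h'.2
  have h3 : (l.length : ZMod 2) = (l'.length : ZMod 2) := by
    rw [h1] at h2
    exact add_left_cancel h2
  have h4 : l.length ≡ l'.length [MOD 2] := (ZMod.natCast_eq_natCast_iff _ _ _).mp h3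
  exact h4
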